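/- arXiv:2108.09101 — 4 statements merged into one kernel-verified Lean document; each statement's English description precedes it below -/
import Mathlib

section
/- Pumping a letter preserves intersection witnesses away from the pumped block: let O = O₀…O_{N−1} be a powerword with O_i = O_{i+1} = O_{i+2} for some i, and let O^{(k)} = O₀…O_{i−1} O_i^k O_{i+1}…O_{N−1} (of length N+k−1) for k ≥ 1. If a word w of length N+k−1 intersects O^{(k)} at some position j, then the word drop_m(w) intersects O^{(k−1)} for every m in the pumped block {i,…,i+k+1} with m ≠ j, provided k ≥ 2 and w_m(s) ∉ O_m^{(k)}(s) for all slots s. -/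
/-- Intersection of an `ℕ`-indexed slotted word and powerword of a given length. -/
def NInter {Sl : Type*} {A : Sl → Type*} (len : ℕ)
    (w : ℕ → ∀ s, A s) (O : ℕ → ∀ s, Set (A s)) : Prop :=
  ∃ j < len, ∃ s, w j s ∈ O j s

/-- `pump O i k` repeats the powerletter `O i` exactly `k` times in place of its
    single occurrence at position `i`. -/
def pump {Sl : Type*} {A : Sl → Type*} (O : ℕ → ∀ s, Set (A s)) (i k : ℕ) :
    ℕ → ∀ s, Set (A s) :=
  fun j => if j < i then O j else if j < i + k then O i else O (j - (k - 1))

/-- `dropN m w` deletes position `m` from `w`. -/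
def dropN {α : Type*} (m : ℕ) (w : ℕ → α) : ℕ → α :=
  fun j => if j < m then w j else w (j + 1)

/-!
Since `O i = O (i + 1) = O (i + 2)`, the powerwords `pump O i (k + 1)` and `pump O i k` agree up
to position `i + k + 1`, and beyond position `i` the former is the latter shifted by one. Deleting
a position `m ≥ i` shifts the word in the same way, so the witness `j` of `w` survives, as `j`
itself if `j < m` (then `j ≤ i + k + 1`) and as `j - 1` if `m < j`.
-/

section DropN

variable {α : Type*} {m j : ℕ} (w : ℕ → α)

theorem dropN_of_lt (h : j < m) : dropN m w j = w j := if_pos h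

theorem dropN_of_le (h : m ≤ j) : dropN m w j = w (j + 1) := if_neg (Nat.not_lt.mpr h)

end DropN

section Pump

variable {Sl : Type*} {A : Sl → Type*} (O : ℕ → ∀ s, Set (A s)) {i j : ℕ} (k : ℕ)

theorem pump_succ_apply_of_le (heq1 : O (i + 1) = O i) (heq2 : O (i + 2) = O i)
    (hj : j ≤ i + k + 1) : pump O i (k + 1) j = pump O i k j := by
  have hO : ∀ n, i ≤ n → n ≤ i + 2 → O n = O i := by
    intro n h₁ h₂
    obtain rfl | rfl | rfl : n = i ∨ n = i + 1 ∨ n = i + 2 := by omega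
    exacts [rfl, heq1, heq2]
  unfold pump
  split_ifs <;> (try rw [hO (j - (k + 1 - 1)) (by omega) (by omega)]) <;>
    (try rw [hO (j - (k - 1)) (by omega) (by omega)]) <;> rfl

theorem pump_succ_apply_succ (hk : 1 ≤ k) (hij : i ≤ j) :
    pump O i (k + 1) (j + 1) = pump O i k j := by
  unfold pump
  split_ifs <;> first
    | rfl
    | omega
    | rw [show j + 1 - (k + 1 - 1) = j - (k - 1) by omega]

end Pump

theorem pump_drop_intersects_general {Sl : Type*} {A : Sl → Type*} {N i k : ℕ}
    (O : ℕ → ∀ s, Set (A s)) (w : ℕ → ∀ s, A s) (j m : ℕ)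
    (heq1 : O (i + 1) = O i) (heq2 : O (i + 2) = O i)
    (hk : 2 ≤ k)
    (hj : j < N + k - 1)
    (hwj : ∃ s, w j s ∈ pump O i k j s)
    (hm₁ : i ≤ m) (hm₂ : m ≤ i + k + 1) (hmj : m ≠ j) (hmlen : m < N + k - 1) :
    NInter (N + k - 2) (dropN m w) (pump O i (k - 1)) := by
  obtain ⟨s, hs⟩ := hwj
  obtain ⟨k, rfl⟩ : ∃ k', k = k' + 1 := ⟨k - 1, by omega⟩
  show NInter (N + k - 1) (dropN m w) (pump O i k)
  rcases Nat.lt_or_gt_of_ne hmj.symm with hjm | hmj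
  · refine ⟨j, by omega, s, ?_⟩
    rw [dropN_of_lt w hjm, ← pump_succ_apply_of_le O k heq1 heq2 (by omega)]
    exact hs
  · obtain ⟨j, rfl⟩ : ∃ j', j = j' + 1 := ⟨j - 1, by omega⟩
    refine ⟨j, by omega, s, ?_⟩
    rw [dropN_of_le w (by omega), ← pump_succ_apply_succ O k (by omega) (by omega)]
    exact hs

/-- pumping a letter preserves intersection witnesses away from the
    pumped block. -/
theorem pump_drop_intersects {Sl : Type*} {A : Sl → Type*} {N i k : ℕ}
    (O : ℕ → ∀ s, Set (A s)) (w : ℕ → ∀ s, A s) (j m : ℕ)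
    (hiN : i + 2 < N)
    (heq1 : O (i + 1) = O i) (heq2 : O (i + 2) = O i)
    (hk : 2 ≤ k)
    (hj : j < N + k - 1)
    (hwj : ∃ s, w j s ∈ pump O i k j s)
    (hm₁ : i ≤ m) (hm₂ : m ≤ i + k + 1) (hmj : m ≠ j) (hmlen : m < N + k - 1)
    (hnm : ∀ s, w m s ∉ pump O i k m s) :
    NInter (N + k - 2) (dropN m w) (pump O i (k - 1)) :=
  pump_drop_intersects_general O w j m heq1 heq2 hk hj hwj hm₁ hm₂ hmj hmlen
end

section
/- Soundness of the inductivity check: let 𝒫 be a predicate on configurations and L a set of traps (one inductive-invariant family per instance size). Suppose (1) 𝒫 holds for the initial configuration of every instance, (2) every initial configuration intersects every compatible trap in L, (3) each O ∈ L is inductive for its instance, and (4) for all configurations C, C', if C intersects all compatible traps of L, 𝒫(C) holds, and C ⊢ C', then 𝒫(C'). Then 𝒫 holds for every reachable configuration of every instance. -/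
/-! Being in every compatible trap is itself an inductive invariant that holds initially, and
𝒫 is preserved by steps taken from configurations satisfying it; an induction along the run
carrying both facts gives 𝒫 at every reachable configuration. -/

namespace Relation.ReflTransGen

variable {α : Type*} {r : α → α → Prop} {I P : α → Prop} {a b : α}

theorem strengthened_invariant (hI₀ : I a) (hI : ∀ x y, r x y → I x → I y)
    (hP₀ : P a) (hP : ∀ x y, I x → P x → r x y → P y) (h : ReflTransGen r a b) :
    I b ∧ P b := by
  induction h with
  | refl => exact ⟨hI₀, hP₀⟩
  | tail _ hstep ih => exact ⟨hI _ _ hstep ih.1, hP _ _ ih.1 ih.2 hstep⟩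

end Relation.ReflTransGen

/-- soundness of the inductivity check -- if the safety predicate holds
    initially, all traps of `L` hold initially and are inductive, and the predicate is
    preserved from configurations intersecting all compatible traps, then it holds for
    every reachable configuration of every instance. -/
theorem inductivity_check_sound {Config Pow : ℕ → Type*}
    (init : ∀ N : ℕ, Config N)
    (step : ∀ {N : ℕ}, Config N → Config N → Prop)
    (inter : ∀ {N : ℕ}, Config N → Pow N → Prop)
    (L : ∀ N : ℕ, Set (Pow N))
    (P : ∀ {N : ℕ}, Config N → Prop)
    (h₁ : ∀ N, P (init N))
    (h₂ : ∀ N, ∀ O ∈ L N, inter (init N) O)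
    (h₃ : ∀ N, ∀ O ∈ L N, ∀ C C' : Config N, step C C' → inter C O → inter C' O)
    (h₄ : ∀ (N : ℕ) (C C' : Config N),
      (∀ O ∈ L N, inter C O) → P C → step C C' → P C') :
    ∀ (N : ℕ) (C : Config N),
      Relation.ReflTransGen (fun a b : Config N => step a b) (init N) C → P C := by
  intro N C hreach
  have traps_inductive : ∀ C C' : Config N, step C C' →
      (∀ O ∈ L N, inter C O) → ∀ O ∈ L N, inter C' O :=
    fun C C' hstep hC O hO => h₃ N O hO C C' hstep (hC O hO)
  exact (hreach.strengthened_invariant (h₂ N) traps_inductive (h₁ N) (h₄ N)).2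
end

section
/- Correctness of the CEGAR termination condition: suppose Algorithm returns true with trap set I, i.e., C₀ ∉ 𝔅, every O ∈ I is a trap, and there is no pair C ⊢ C' with C intersecting all O ∈ I and C' ∈ 𝔅. Then no configuration in 𝔅 is reachable from C₀. -/
/-! A trap holds initially and is preserved by every step, so every reachable configuration
intersects all traps in `I`. A reachable bad configuration differs from the non-bad `C₀`, hence is
entered by a step from a reachable configuration; that configuration intersects all of `I`, which is
exactly the pair that the termination condition excludes. -/

section Trap

variable {Config Pow : Type*} (C₀ : Config) (step : Config → Config → Prop)
  (inter : Config → Pow → Prop)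

def IsTrap (O : Pow) : Prop :=
  inter C₀ O ∧ ∀ C C', step C C' → inter C O → inter C' O

variable {C₀ step inter}

theorem IsTrap.inter_of_reflTransGen {O : Pow} (hO : IsTrap C₀ step inter O) {C : Config}
    (hC : Relation.ReflTransGen step C₀ C) : inter C O := by
  induction hC with
  | refl => exact hO.1
  | tail _ hstep ih => exact hO.2 _ _ hstep ih

end Trap

/-- correctness of the CEGAR termination condition: if `C₀` is not bad,
    every `O ∈ I` is a trap, and no step from a configuration intersecting all of `I`
    reaches a bad configuration, then no bad configuration is reachable. -/
theorem cegar_termination_sound {Config Pow : Type*} (C₀ : Config)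
    (step : Config → Config → Prop) (inter : Config → Pow → Prop)
    (Bad : Set Config) (I : Set Pow)
    (hinit : C₀ ∉ Bad)
    (htrap : ∀ O ∈ I, inter C₀ O ∧ ∀ C C', step C C' → inter C O → inter C' O)
    (hnopair : ¬∃ C C', step C C' ∧ (∀ O ∈ I, inter C O) ∧ C' ∈ Bad) :
    ∀ C, Relation.ReflTransGen step C₀ C → C ∉ Bad := by
  intro C hC hBad
  rcases hC.cases_tail with rfl | ⟨B, hB, hstep⟩
  · exact hinit hBad
  · exact hnopair ⟨B, C, hstep, fun O hO => IsTrap.inter_of_reflTransGen (htrap O hO) hB, hBad⟩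
end

section
/- For the reduced Dijkstra model with N = 2 agents, the configuration in which both agents are in state critical is unreachable from the initial configuration. -/
/-- States of the reduced Dijkstra mutual-exclusion algorithm. -/
inductive DState : Type
  | initial | loopS | brk | critical | done
  deriving DecidableEq

/-- An agent's location: a state, or (`Sum.inr j`) executing the loop transition with
    pointer at agent `j`. -/
abbrev DLoc := DState ⊕ Fin 2

/-- A configuration of the 2-agent instance: for each agent its location and its
    boolean variable `b`. -/
abbrev Conf := Fin 2 → DLoc × Bool

open DState in
/-- The transition relation of the 2-agent instance of the reduced Dijkstra algorithm. -/
inductive DStep : Conf → Conf → Prop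
  | toLoop (C : Conf) (i : Fin 2) : (C i).1 = Sum.inl initial →
      DStep C (Function.update C i (Sum.inl loopS, true))
  | fromBrk (C : Conf) (i : Fin 2) : (C i).1 = Sum.inl brk →
      DStep C (Function.update C i (Sum.inl initial, false))
  | critToDone (C : Conf) (i : Fin 2) : (C i).1 = Sum.inl critical →
      DStep C (Function.update C i (Sum.inl done, (C i).2))
  | fromDone (C : Conf) (i : Fin 2) : (C i).1 = Sum.inl done →
      DStep C (Function.update C i (Sum.inl initial, false))
  | startIter (C : Conf) (i : Fin 2) : (C i).1 = Sum.inl loopS →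
      DStep C (Function.update C i (Sum.inr 0, (C i).2))
  | iterFail (C : Conf) (i j : Fin 2) : (C i).1 = Sum.inr j → j ≠ i → (C j).2 = true →
      DStep C (Function.update C i (Sum.inl brk, (C i).2))
  | iterAdvance (C : Conf) (i : Fin 2) : (C i).1 = Sum.inr 0 →
      ((0 : Fin 2) = i ∨ (C 0).2 = false) →
      DStep C (Function.update C i (Sum.inr 1, (C i).2))
  | iterSucceed (C : Conf) (i : Fin 2) : (C i).1 = Sum.inr 1 →
      ((1 : Fin 2) = i ∨ (C 1).2 = false) →
      DStep C (Function.update C i (Sum.inl critical, (C i).2))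

/-- The initial configuration: both agents in state `initial` with `b = false`. -/
def initConf : Conf := fun _ => (Sum.inl DState.initial, false)

/-! Outside `initial` and `brk` an agent's flag `b` is always raised. Hence agent 0 enters
`critical` only while agent 1 is idle, and agent 1 advances past agent 0 only while agent 0 is
not critical. So, inductively, while agent 0 is critical agent 1 has not got past agent 0: its
location is neither the loop pointer `1` nor `critical`. -/

open DState

def Idle (l : DLoc) : Prop := l = Sum.inl initial ∨ l = Sum.inl brk

def FlagRaised (a : DLoc × Bool) : Prop := ¬Idle a.1 → a.2 = true

def FlagsRaised (C : Conf) : Prop := ∀ k, FlagRaised (C k)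

def CriticalExclusive (C : Conf) : Prop :=
  (C 0).1 = Sum.inl critical → (C 1).1 ≠ Sum.inr 1 ∧ (C 1).1 ≠ Sum.inl critical

lemma FlagRaised.idle_of_lowered {a : DLoc × Bool} (h : FlagRaised a) (hb : a.2 = false) :
    Idle a.1 :=
  not_not.1 fun hn => by simp [h hn] at hb

lemma flagsRaised_initConf : FlagsRaised initConf := fun _ h => absurd (Or.inl rfl) h

lemma criticalExclusive_initConf : CriticalExclusive initConf := by
  simp [CriticalExclusive, initConf]

lemma FlagsRaised.update {C : Conf} (h : FlagsRaised C) {i : Fin 2} {a : DLoc × Bool}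
    (ha : FlagRaised a) : FlagsRaised (Function.update C i a) :=
  Function.forall_update_iff C (p := fun _ => FlagRaised) |>.2 ⟨ha, fun k _ => h k⟩

lemma FlagsRaised.of_step {C C' : Conf} (h : FlagsRaised C) (s : DStep C C') :
    FlagsRaised C' := by
  cases s
  case toLoop | fromBrk | fromDone | iterFail => exact h.update fun _ => by simp_all [Idle]
  all_goals exact h.update fun _ => h _ (by simp [Idle, *])

lemma CriticalExclusive.of_step {C C' : Conf} (hf : FlagsRaised C) (h : CriticalExclusive C)
    (s : DStep C C') : CriticalExclusive C' := by
  cases s with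
  | iterAdvance i hi hg =>
    fin_cases i
    · simp [CriticalExclusive]
    · rcases (hf 0).idle_of_lowered (hg.resolve_left (by decide)) with h0 | h0 <;>
        simp [CriticalExclusive, h0]
  | iterSucceed i hi hg =>
    fin_cases i
    · rcases (hf 1).idle_of_lowered (hg.resolve_left (by decide)) with h1 | h1 <;>
        simp [CriticalExclusive, h1]
    · simp_all [CriticalExclusive]
  | toLoop i | fromBrk i | critToDone i | fromDone i | startIter i | iterFail i =>
    fin_cases i <;> simp_all [CriticalExclusive]

lemma flagsRaised_and_criticalExclusive_of_reachable {C : Conf}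
    (hC : Relation.ReflTransGen DStep initConf C) : FlagsRaised C ∧ CriticalExclusive C := by
  induction hC with
  | refl => exact ⟨flagsRaised_initConf, criticalExclusive_initConf⟩
  | tail _ s ih => exact ⟨ih.1.of_step s, ih.2.of_step ih.1 s⟩

/-- in the 2-agent instance, no reachable configuration has both agents in
    state `critical`; in particular the configuration with both agents critical is
    unreachable. -/
theorem dijkstra2_mutual_exclusion :
    ∀ C : Conf, Relation.ReflTransGen DStep initConf C →
      ¬((C 0).1 = Sum.inl DState.critical ∧ (C 1).1 = Sum.inl DState.critical) :=
  fun _ hC ⟨h0, h1⟩ => ((flagsRaised_and_criticalExclusive_of_reachable hC).2 h0).2 h1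
end
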